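/- arXiv:1705.00216 — 6 statements merged into one kernel-verified Lean document; each statement's English description precedes it below -/
import Mathlib

section
/- For any positive integer k there exists a tree T with τ(T) - γ_t(T) = k, where γ_t is the total domination number and τ is the vertex cover number. -/
open SimpleGraph

/-- `D` is a total dominating set of `G`: every vertex has a neighbor in `D`. -/
def IsTotalDomSet {V : Type*} (G : SimpleGraph V) (D : Finset V) : Prop :=
  ∀ v : V, ∃ u ∈ D, G.Adj v u

/-- `X` is a vertex cover of `G`: every edge has an endpoint in `X`. -/
def IsVertexCover {V : Type*} (G : SimpleGraph V) (X : Finset V) : Prop :=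
  ∀ ⦃a b : V⦄, G.Adj a b → a ∈ X ∨ b ∈ X

/-- The total domination number `γ_t(G)`. -/
noncomputable def gammaT {V : Type*} (G : SimpleGraph V) : ℕ :=
  sInf {n | ∃ D : Finset V, IsTotalDomSet G D ∧ D.card = n}

/-- The vertex cover number `τ(G)`. -/
noncomputable def tau {V : Type*} (G : SimpleGraph V) : ℕ :=
  sInf {n | ∃ X : Finset V, _root_.IsVertexCover G X ∧ X.card = n}

/-- A `(γ_t-τ)`-set: simultaneously a minimum total dominating set and a
minimum vertex cover. -/
def IsGttSet {V : Type*} (G : SimpleGraph V) (D : Finset V) : Prop :=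
  IsTotalDomSet G D ∧ _root_.IsVertexCover G D ∧ D.card = gammaT G ∧ D.card = tau G

/-- The sum `G +_{uv} H`: the disjoint union of `G` and `H` with the extra edge `uv`. -/
def graphSum {α β : Type*} (G : SimpleGraph α) (H : SimpleGraph β) (u : α) (v : β) :
    SimpleGraph (α ⊕ β) :=
  SimpleGraph.fromRel (fun x y =>
    (∃ a b, x = Sum.inl a ∧ y = Sum.inl b ∧ G.Adj a b) ∨
    (∃ a b, x = Sum.inr a ∧ y = Sum.inr b ∧ H.Adj a b) ∨
    (x = Sum.inl u ∧ y = Sum.inr v))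

/-- The private neighborhood `pn(u,S) = {w : N(w) ∩ S = {u}}`. -/
def pn {V : Type*} (G : SimpleGraph V) (S : Finset V) (u : V) : Set V :=
  {w | G.neighborSet w ∩ ↑S = {u}}

/-- `v` is quasi-isolated: for some minimum total dominating set `S` there is
`u ∈ S` with `pn(u,S) = {v}`. -/
def QuasiIsolated {V : Type*} (G : SimpleGraph V) (v : V) : Prop :=
  ∃ S : Finset V, IsTotalDomSet G S ∧ S.card = gammaT G ∧ ∃ u ∈ S, pn G S u = {v}

/-- An end vertex: a vertex of degree 1. -/
def IsEndVertex {V : Type*} (G : SimpleGraph V) (v : V) : Prop :=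
  (G.neighborSet v).ncard = 1

/-!
Take centres `c₀, …, c_k`, join consecutive centres by a path of length three, and attach to each
centre a leaf and a pendant path of length two. This tree on `6k + 4` vertices has a perfect
matching, so `τ = 3k + 2`. Every total dominating set contains the `2k + 2` support vertices (the
neighbours of leaves), and these alone dominate totally, so `γ_t = 2k + 2`.
-/

namespace SimpleGraph

variable {V : Type*}

def parentGraph (root : V) (p : V → V) : SimpleGraph V :=
  fromRel fun a b => a ≠ root ∧ b = p a

theorem parentGraph_adj {root : V} {p : V → V} {a b : V} :
    (parentGraph root p).Adj a b ↔ a ≠ b ∧ (a ≠ root ∧ b = p a ∨ b ≠ root ∧ a = p b) :=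
  fromRel_adj _ _ _

section ParentGraph

variable [LinearOrder V] {root : V} {p : V → V}

/-- A cycle through a vertex `M` of maximal order has two distinct neighbours of `M` that are both
smaller than `M`; but the only smaller neighbour of `M` is its parent. -/
theorem parentGraph_isAcyclic (hp : ∀ v, v ≠ root → p v < v) : (parentGraph root p).IsAcyclic := by
  intro v c hc
  obtain ⟨M, hM, hmax⟩ := c.support.toFinset.exists_max_image id ⟨v, by simp⟩
  have hMc : M ∈ c.support := by simpa using hM
  set c' := c.rotate M hMc
  have hc' : c'.IsCycle := hc.rotate hMc
  have eq_parent : ∀ u ∈ c'.support, (parentGraph root p).Adj u M → u = p M := by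
    intro u hu hadj
    have hle : u ≤ M := hmax u (by simpa [c', Walk.mem_support_rotate_iff] using hu)
    obtain ⟨-, ⟨hu_root, rfl⟩ | ⟨-, rfl⟩⟩ := parentGraph_adj.mp hadj
    · exact absurd (hp u hu_root) hle.not_gt
    · rfl
  exact hc'.snd_ne_penultimate <|
    (eq_parent _ (c'.getVert_mem_support _) (c'.adj_snd hc'.not_nil).symm).trans
      (eq_parent _ (c'.getVert_mem_support _) (c'.adj_penultimate hc'.not_nil)).symm

theorem parentGraph_connected [WellFoundedLT V] (hp : ∀ v, v ≠ root → p v < v) :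
    (parentGraph root p).Connected := by
  have : Nonempty V := ⟨root⟩
  have reach_root : ∀ v, (parentGraph root p).Reachable v root := by
    intro v
    induction v using WellFoundedLT.induction with
    | _ v ih =>
      by_cases hv : v = root
      · rw [hv]
      · have hadj : (parentGraph root p).Adj v (p v) :=
          parentGraph_adj.mpr ⟨(hp v hv).ne', Or.inl ⟨hv, rfl⟩⟩
        exact hadj.reachable.trans (ih _ (hp v hv))
  exact ⟨fun u v => (reach_root u).trans (reach_root v).symm⟩

theorem parentGraph_isTree [WellFoundedLT V] (hp : ∀ v, v ≠ root → p v < v) :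
    (parentGraph root p).IsTree :=
  ⟨parentGraph_connected hp, parentGraph_isAcyclic hp⟩

end ParentGraph

end SimpleGraph

section Bounds

variable {V : Type*} {G : SimpleGraph V}

theorem tau_eq_of_isVertexCover {X : Finset V} {m : ℕ} (hX : _root_.IsVertexCover G X)
    (hXm : X.card ≤ m) (hm : ∀ Y : Finset V, _root_.IsVertexCover G Y → m ≤ Y.card) :
    tau G = m := by
  unfold tau
  apply le_antisymm
  · exact le_trans (Nat.sInf_le ⟨X, hX, rfl⟩) hXm
  · exact le_csInf ⟨_, X, hX, rfl⟩ (by rintro _ ⟨Y, hY, rfl⟩; exact hm Y hY)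

theorem gammaT_eq_of_isTotalDomSet {D : Finset V} {m : ℕ} (hD : IsTotalDomSet G D)
    (hDm : D.card ≤ m) (hm : ∀ E : Finset V, IsTotalDomSet G E → m ≤ E.card) :
    gammaT G = m := by
  unfold gammaT
  apply le_antisymm
  · exact le_trans (Nat.sInf_le ⟨D, hD, rfl⟩) hDm
  · exact le_csInf ⟨_, D, hD, rfl⟩ (by rintro _ ⟨E, hE, rfl⟩; exact hm E hE)

/-- The edges in the fibres of `f` form a matching. -/
theorem card_le_card_of_isVertexCover {ι : Type*} [Fintype ι] (f : V → ι)
    (hf : ∀ i, ∃ a b, G.Adj a b ∧ f a = i ∧ f b = i) {X : Finset V}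
    (hX : _root_.IsVertexCover G X) : Fintype.card ι ≤ X.card := by
  refine Finset.card_le_card_of_surjOn f fun i _ => ?_
  obtain ⟨a, b, hab, ha, hb⟩ := hf i
  rcases hX hab with h | h
  exacts [⟨a, h, ha⟩, ⟨b, h, hb⟩]

theorem mem_of_isTotalDomSet {D : Finset V} (hD : IsTotalDomSet G D) {w v : V}
    (hw : ∀ u, G.Adj w u → u = v) : v ∈ D := by
  obtain ⟨u, hu, hwu⟩ := hD w
  exact hw u hwu ▸ hu

theorem card_le_card_of_isTotalDomSet {ι : Type*} [Fintype ι] (f : V → ι)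
    (hf : ∀ i, ∃ w v, (∀ u, G.Adj w u → u = v) ∧ f v = i) {D : Finset V}
    (hD : IsTotalDomSet G D) : Fintype.card ι ≤ D.card := by
  refine Finset.card_le_card_of_surjOn f fun i _ => ?_
  obtain ⟨w, v, hw, hv⟩ := hf i
  exact ⟨v, mem_of_isTotalDomSet hD hw, hv⟩

end Bounds

/-- Vertex `6j` is the centre `c_j`, `6j + 1` its leaf, `6j + 2`, `6j + 3` its pendant path, and
`6j + 4`, `6j + 5` lead on to the next centre `6j + 6`. -/
def gapParent (v : ℕ) : ℕ :=
  if v % 6 = 2 then v - 2 else if v % 6 = 4 then v - 4 else v - 1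

theorem gapParent_cases (v : ℕ) :
    v % 6 = 2 ∧ gapParent v = v - 2 ∨ v % 6 = 4 ∧ gapParent v = v - 4 ∨
      v % 6 ≠ 2 ∧ v % 6 ≠ 4 ∧ gapParent v = v - 1 := by
  unfold gapParent
  split_ifs <;> omega

def gapTree (k : ℕ) : SimpleGraph (Fin (6 * k + 4)) :=
  SimpleGraph.parentGraph 0 fun v => ⟨gapParent v, by have := gapParent_cases v; omega⟩

theorem gapTree_adj {k : ℕ} {a b : Fin (6 * k + 4)} :
    (gapTree k).Adj a b ↔
      a.val ≠ 0 ∧ b.val = gapParent a ∨ b.val ≠ 0 ∧ a.val = gapParent b := by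
  have := gapParent_cases a
  have := gapParent_cases b
  simp only [gapTree, SimpleGraph.parentGraph_adj, ne_eq, Fin.ext_iff, Fin.val_zero]
  omega

theorem gapTree_isTree (k : ℕ) : (gapTree k).IsTree :=
  SimpleGraph.parentGraph_isTree fun v hv => by
    have := gapParent_cases v
    simp only [ne_eq, Fin.ext_iff, Fin.val_zero, Fin.lt_def] at hv ⊢
    omega

theorem tau_gapTree (k : ℕ) : tau (gapTree k) = 3 * k + 2 := by
  let half : Fin (6 * k + 4) → Fin (3 * k + 2) := fun v => ⟨v / 2, by omega⟩
  apply tau_eq_of_isVertexCover (X := Finset.univ.filter fun v => v.val % 2 = 0)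
  · intro a b hab
    have := gapParent_cases a
    have := gapParent_cases b
    simp only [gapTree_adj, Finset.mem_filter, Finset.mem_univ, true_and] at hab ⊢
    omega
  · refine (Finset.card_le_card_of_injOn half (fun _ _ => Finset.mem_univ _) ?_).trans_eq
      (Finset.card_fin _)
    intro a ha b hb h
    simp only [Finset.coe_filter, Finset.mem_univ, true_and, Set.mem_ofPred_eq, half,
      Fin.ext_iff] at ha hb h ⊢
    omega
  · intro Y hY
    refine (card_le_card_of_isVertexCover half (fun i => ⟨⟨2 * i, by omega⟩, ⟨2 * i + 1, by omega⟩,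
      ?_, ?_, ?_⟩) hY).trans_eq' (Fintype.card_fin _)
    · have := gapParent_cases (2 * i + 1)
      simp only [gapTree_adj]
      omega
    all_goals simp only [half, Fin.ext_iff]; omega

theorem gammaT_gapTree (k : ℕ) : gammaT (gapTree k) = 2 * k + 2 := by
  let third : Fin (6 * k + 4) → Fin (2 * k + 2) := fun v => ⟨(v + 1) / 3, by omega⟩
  apply gammaT_eq_of_isTotalDomSet (D := Finset.univ.filter fun v => v.val % 6 = 0 ∨ v.val % 6 = 2)
  · intro v
    have := gapParent_cases v
    simp only [Finset.mem_filter, Finset.mem_univ, true_and]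
    obtain hv | hv | hv : v.val % 6 = 0 ∨ v.val % 6 = 5 ∨ v.val % 6 ≠ 0 ∧ v.val % 6 ≠ 5 := by
      omega
    · have := gapParent_cases (v + 2)
      exact ⟨⟨v + 2, by omega⟩, by simp only; omega, gapTree_adj.mpr (by simp only; omega)⟩
    · have := gapParent_cases (v + 1)
      exact ⟨⟨v + 1, by omega⟩, by simp only; omega, gapTree_adj.mpr (by simp only; omega)⟩
    · exact ⟨⟨gapParent v, by omega⟩, by simp only; omega, gapTree_adj.mpr (.inl ⟨by omega, rfl⟩)⟩
  · refine (Finset.card_le_card_of_injOn third (fun _ _ => Finset.mem_univ _) ?_).trans_eq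
      (Finset.card_fin _)
    intro a ha b hb h
    simp only [Finset.coe_filter, Finset.mem_univ, true_and, Set.mem_ofPred_eq, third,
      Fin.ext_iff] at ha hb h ⊢
    omega
  · intro E hE
    -- the fibre `2j` holds the support vertex `6j` with its leaf, the fibre `2j + 1` holds `6j + 2`
    refine (card_le_card_of_isTotalDomSet third (fun i => ⟨⟨3 * i - i % 2 + 1, by omega⟩,
      ⟨3 * i - i % 2, by omega⟩, fun u hu => ?_, ?_⟩) hE).trans_eq' (Fintype.card_fin _)
    · have := gapParent_cases u
      have := gapParent_cases (3 * i - i % 2 + 1)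
      simp only [gapTree_adj] at hu
      simp only [Fin.ext_iff]
      omega
    · simp only [third, Fin.ext_iff]
      omega

theorem stmt0_general (k : ℕ) :
    ∃ (n : ℕ) (T : SimpleGraph (Fin n)), T.IsTree ∧ tau T = gammaT T + k :=
  ⟨6 * k + 4, gapTree k, gapTree_isTree k, by rw [tau_gapTree, gammaT_gapTree]; ring⟩

/-- For any positive integer `k` there exists a tree `T` with `τ(T) - γ_t(T) = k`. -/
theorem stmt0 (k : ℕ) (hk : 0 < k) :
    ∃ (n : ℕ) (T : SimpleGraph (Fin n)), T.IsTree ∧ tau T = gammaT T + k :=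
  stmt0_general k
end

section
/- For any positive integer k there exists a tree T with γ_t(T) - τ(T) = k. -/
open SimpleGraph

/-!
The spider with `m ≥ 1` legs of length three works, with `m = k + 1`. In each leg the leaf and
the middle vertex have disjoint neighbourhoods, and so do vertices of different legs; hence a
total dominating set needs two vertices per leg, and the two inner vertices of every leg suffice:
`γ_t = 2m`. The edge from the centre to the first leg together with the outer edge of every leg
is a matching, and the centre with the middle vertex of every leg covers all edges: `τ = m + 1`.
-/

namespace SimpleGraph

variable {V : Type*} {G : SimpleGraph V}

theorem reachable_of_exists_adj_rank_lt (rank : V → ℕ) {r : V}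
    (hdesc : ∀ v ≠ r, ∃ w, G.Adj v w ∧ rank w < rank v) (v : V) : G.Reachable v r := by
  induction hv : rank v using Nat.strong_induction_on generalizing v with
  | _ n ih =>
    by_cases hvr : v = r
    · exact hvr ▸ Reachable.refl v
    · obtain ⟨w, hvw, hw⟩ := hdesc v hvr
      exact hvw.reachable.trans (ih _ (hv ▸ hw) w rfl)

/-- A vertex of maximal rank on a cycle has two distinct neighbours on it, both of lower rank. -/
theorem isAcyclic_of_rank (rank : V → ℕ) (hne : ∀ ⦃a b⦄, G.Adj a b → rank a ≠ rank b)
    (huniq : ∀ ⦃v a b⦄, G.Adj v a → G.Adj v b → rank a < rank v → rank b < rank v → a = b) :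
    G.IsAcyclic := by
  classical
  intro u c hc
  obtain ⟨v, hv, hmax⟩ := c.support.toFinset.exists_max_image rank ⟨u, by simp⟩
  rw [List.mem_toFinset] at hv
  have hc' := hc.rotate hv
  have hnil := hc'.not_nil
  have hlt : ∀ i, G.Adj v ((c.rotate v hv).getVert i) →
      rank ((c.rotate v hv).getVert i) < rank v := fun i hadj =>
    have hi := (Walk.mem_support_rotate_iff ..).1 (Walk.getVert_mem_support _ i)
    (hmax _ (List.mem_toFinset.2 hi)).lt_of_ne (hne hadj).symm
  exact hc'.snd_ne_penultimate (huniq (Walk.adj_snd hnil) (Walk.adj_penultimate hnil).symm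
    (hlt _ (Walk.adj_snd hnil)) (hlt _ (Walk.adj_penultimate hnil).symm))

theorem isTree_of_rank (rank : V → ℕ) (r : V)
    (hdesc : ∀ v ≠ r, ∃ w, G.Adj v w ∧ rank w < rank v)
    (hne : ∀ ⦃a b⦄, G.Adj a b → rank a ≠ rank b)
    (huniq : ∀ ⦃v a b⦄, G.Adj v a → G.Adj v b → rank a < rank v → rank b < rank v → a = b) :
    G.IsTree :=
  have : Nonempty V := ⟨r⟩
  ⟨⟨fun a b => (reachable_of_exists_adj_rank_lt rank hdesc a).trans
    (reachable_of_exists_adj_rank_lt rank hdesc b).symm⟩, isAcyclic_of_rank rank hne huniq⟩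

end SimpleGraph

section Bounds

variable {V ι : Type*} [Fintype ι] {G : SimpleGraph V}

theorem IsTotalDomSet.card_le_card {D : Finset V} (hD : IsTotalDomSet G D) (v : ι → V)
    (hv : Pairwise fun i j => Disjoint (G.neighborSet (v i)) (G.neighborSet (v j))) :
    Fintype.card ι ≤ D.card := by
  choose f hfD hadj using fun i => hD (v i)
  refine Finset.card_le_card_of_injOn f (fun i _ => hfD i) fun i _ j _ hij => ?_
  by_contra hne
  exact Set.disjoint_left.1 (hv hne) (hadj i) (hij ▸ hadj j)

theorem IsVertexCover.card_le_card {X : Finset V} (hX : _root_.IsVertexCover G X)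
    (u w : ι → V) (hadj : ∀ i, G.Adj (u i) (w i))
    (hdisj : Pairwise fun i j => Disjoint ({u i, w i} : Set V) {u j, w j}) :
    Fintype.card ι ≤ X.card := by
  have hcov : ∀ i, ∃ x ∈ X, x ∈ ({u i, w i} : Set V) := fun i => by
    rcases hX (hadj i) with h | h
    · exact ⟨u i, h, Or.inl rfl⟩
    · exact ⟨w i, h, Or.inr rfl⟩
  choose f hfX hf using hcov
  refine Finset.card_le_card_of_injOn f (fun i _ => hfX i) fun i _ j _ hij => ?_
  by_contra hne
  exact Set.disjoint_left.1 (hdisj hne) (hf i) (hij ▸ hf j)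

theorem gammaT_eq_of_forall_card_le {D : Finset V} {n : ℕ} (hD : IsTotalDomSet G D)
    (hcard : D.card ≤ n) (hmin : ∀ D', IsTotalDomSet G D' → n ≤ D'.card) : gammaT G = n := by
  unfold gammaT
  refine le_antisymm ?_ (le_csInf ⟨D.card, D, hD, rfl⟩ ?_)
  · exact (Nat.sInf_le (Set.mem_ofPred.2 ⟨D, hD, rfl⟩)).trans hcard
  · rintro _ ⟨D', hD', rfl⟩
    exact hmin D' hD'

theorem tau_eq_of_forall_card_le {X : Finset V} {n : ℕ} (hX : _root_.IsVertexCover G X)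
    (hcard : X.card ≤ n) (hmin : ∀ X', _root_.IsVertexCover G X' → n ≤ X'.card) : tau G = n := by
  unfold tau
  refine le_antisymm ?_ (le_csInf ⟨X.card, X, hX, rfl⟩ ?_)
  · exact (Nat.sInf_le (Set.mem_ofPred.2 ⟨X, hX, rfl⟩)).trans hcard
  · rintro _ ⟨X', hX', rfl⟩
    exact hmin X' hX'

end Bounds

/-- Vertex `0` is the centre and `3i+1 — 3i+2 — 3i+3` is the `i`-th leg. -/
def spider (m : ℕ) : SimpleGraph (Fin (3 * m + 1)) :=
  fromRel fun a b => (a : ℕ) = 0 ∧ (b : ℕ) % 3 = 1 ∨ (b : ℕ) = a + 1 ∧ (b : ℕ) % 3 ≠ 1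

namespace spider

variable {m : ℕ}

theorem adj_iff {a b : Fin (3 * m + 1)} :
    (spider m).Adj a b ↔
      ((a : ℕ) = 0 ∧ (b : ℕ) % 3 = 1 ∨ (b : ℕ) = a + 1 ∧ (b : ℕ) % 3 ≠ 1) ∨
      ((b : ℕ) = 0 ∧ (a : ℕ) % 3 = 1 ∨ (a : ℕ) = b + 1 ∧ (a : ℕ) % 3 ≠ 1) := by
  simp only [spider, fromRel_adj, ne_eq, Fin.ext_iff]
  omega

theorem isTree (m : ℕ) : (spider m).IsTree := by
  refine isTree_of_rank Fin.val 0 (fun v hv => ?_) (fun a b hab => ?_)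
    (fun v a b hva hvb ha hb => ?_)
  · have hv0 : (v : ℕ) ≠ 0 := fun h => hv (Fin.ext h)
    by_cases h1 : (v : ℕ) % 3 = 1
    · exact ⟨⟨0, by omega⟩, adj_iff.2 (Or.inr (Or.inl ⟨rfl, h1⟩)), Nat.pos_of_ne_zero hv0⟩
    · exact ⟨⟨v - 1, by omega⟩, adj_iff.2 (Or.inr (Or.inr ⟨by simp only; omega, h1⟩)),
        by simp only; omega⟩
  · rw [adj_iff] at hab
    omega
  · rw [adj_iff] at hva hvb
    exact Fin.ext (by omega)

theorem card_le_of_isTotalDomSet {D : Finset (Fin (3 * m + 1))}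
    (hD : IsTotalDomSet (spider m) D) : 2 * m ≤ D.card := by
  have := hD.card_le_card (ι := Fin m × Fin 2) (fun p => ⟨3 * p.1 + 2 + p.2, by omega⟩) ?_
  · simpa [mul_comm] using this
  rintro ⟨i, s⟩ ⟨j, t⟩ hij
  refine Set.disjoint_left.2 fun w hwi hwj => hij ?_
  simp only [mem_neighborSet, adj_iff] at hwi hwj
  ext <;> simp only at * <;> omega

theorem card_le_of_isVertexCover (hm : 0 < m) {X : Finset (Fin (3 * m + 1))}
    (hX : _root_.IsVertexCover (spider m) X) : m + 1 ≤ X.card := by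
  have := hX.card_le_card (ι := Option (Fin m))
    (fun o => o.elim ⟨0, by omega⟩ fun i => ⟨3 * i + 2, by omega⟩)
    (fun o => o.elim ⟨1, by omega⟩ fun i => ⟨3 * i + 3, by omega⟩) ?_ ?_
  · simpa using this
  · rintro (_ | i) <;> simp [adj_iff]
  · rintro (_ | i) (_ | j) hij
    · exact absurd rfl hij
    all_goals
      simp only [Option.elim, Set.disjoint_insert_left, Set.disjoint_insert_right,
        Set.mem_insert_iff, Set.mem_singleton_iff, Set.disjoint_singleton, ne_eq, Fin.ext_iff,
        Option.some_inj] at hij ⊢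
      omega

def totalDomSet (m : ℕ) : Finset (Fin (3 * m + 1)) :=
  Finset.univ.filter fun v => (v : ℕ) % 3 ≠ 0

def vertexCover (m : ℕ) : Finset (Fin (3 * m + 1)) :=
  Finset.univ.filter fun v => (v : ℕ) = 0 ∨ (v : ℕ) % 3 = 2

theorem isTotalDomSet_totalDomSet (hm : 0 < m) : IsTotalDomSet (spider m) (totalDomSet m) := by
  intro v
  refine ⟨⟨if (v : ℕ) = 0 then 1 else if (v : ℕ) % 3 = 1 then v + 1 else v - 1,
    by split_ifs <;> omega⟩, ?_, ?_⟩ <;>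
    simp only [totalDomSet, Finset.mem_filter, Finset.mem_univ, true_and, adj_iff] <;>
    split_ifs <;> omega

theorem card_totalDomSet_le : (totalDomSet m).card ≤ 2 * m := by
  refine (Finset.card_le_card_of_injOn (fun v : Fin (3 * m + 1) => (v : ℕ) - v / 3 - 1)
    (t := Finset.range (2 * m)) (fun v hv => ?_) (fun v hv w hw hvw => ?_)).trans_eq
    (Finset.card_range _)
  all_goals simp only [totalDomSet, Finset.coe_filter, Finset.mem_univ, true_and,
    Set.mem_ofPred, Finset.coe_range, Set.mem_Iio] at *
  · omega
  · exact Fin.ext (by omega)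

theorem isVertexCover_vertexCover : _root_.IsVertexCover (spider m) (vertexCover m) := by
  intro a b hab
  simp only [vertexCover, Finset.mem_filter, Finset.mem_univ, true_and]
  rw [adj_iff] at hab
  omega

theorem card_vertexCover_le : (vertexCover m).card ≤ m + 1 := by
  refine (Finset.card_le_card_of_injOn (fun v : Fin (3 * m + 1) => ((v : ℕ) + 1) / 3)
    (t := Finset.range (m + 1)) (fun v hv => ?_) (fun v hv w hw hvw => ?_)).trans_eq
    (Finset.card_range _)
  all_goals simp only [vertexCover, Finset.coe_filter, Finset.mem_univ, true_and,
    Set.mem_ofPred, Finset.coe_range, Set.mem_Iio] at *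
  · omega
  · exact Fin.ext (by omega)

theorem gammaT_eq (hm : 0 < m) : gammaT (spider m) = 2 * m :=
  gammaT_eq_of_forall_card_le (isTotalDomSet_totalDomSet hm) card_totalDomSet_le
    fun _ => card_le_of_isTotalDomSet

theorem tau_eq (hm : 0 < m) : tau (spider m) = m + 1 :=
  tau_eq_of_forall_card_le isVertexCover_vertexCover card_vertexCover_le
    fun _ => card_le_of_isVertexCover hm

end spider

theorem stmt1_general (k : ℕ) :
    ∃ (n : ℕ) (T : SimpleGraph (Fin n)), T.IsTree ∧ gammaT T = tau T + k := by
  refine ⟨_, spider (k + 1), spider.isTree _, ?_⟩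
  rw [spider.gammaT_eq k.succ_pos, spider.tau_eq k.succ_pos]
  omega

/-- For any positive integer `k` there exists a tree `T` with `γ_t(T) - τ(T) = k`. -/
theorem stmt1 (k : ℕ) (hk : 0 < k) :
    ∃ (n : ℕ) (T : SimpleGraph (Fin n)), T.IsTree ∧ gammaT T = tau T + k :=
  stmt1_general k
end

section
/- If G is a connected graph with at least three vertices that is not a star, then there exists a minimum total dominating set D of G containing no end vertex (vertex of degree 1) of G. -/
open SimpleGraph

/-!
Among the minimum total dominating sets choose one, `D`, with the fewest end vertices. If an end
vertex `v` lay in `D`, its only neighbour `u` would be the only vertex it dominates. As `G` is not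
a star, `u` has a neighbour `w` that is not an end vertex, and replacing `v` by `w` gives a total
dominating set that is no larger, hence again minimum, with fewer end vertices.
-/

section

variable {V : Type*} {G : SimpleGraph V}

def IsStar (G : SimpleGraph V) : Prop :=
  G.IsTree ∧ {v : V | 1 < (G.neighborSet v).ncard}.Subsingleton

lemma IsEndVertex.neighborSet_eq {u v : V} (hv : IsEndVertex G v) (huv : G.Adj v u) :
    G.neighborSet v = {u} := by
  obtain ⟨a, ha⟩ := Set.ncard_eq_one.mp hv
  have hu : u ∈ G.neighborSet v := huv
  rw [ha, Set.mem_singleton_iff] at hu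
  rw [ha, hu]

section Star

variable {u : V} (hleaves : ∀ w, G.Adj u w → IsEndVertex G w)
include hleaves

lemma eq_or_adj_of_walk_of_forall_adj_isEndVertex {x : V} (p : G.Walk x u) :
    x = u ∨ G.Adj u x := by
  induction p with
  | nil => exact .inl rfl
  | cons hxy _ ih =>
    rcases ih hleaves with rfl | huy
    · exact .inr hxy.symm
    · have hx : _ ∈ G.neighborSet _ := hxy.symm
      rw [(hleaves _ huy).neighborSet_eq huy.symm] at hx
      exact .inl hx

lemma SimpleGraph.Connected.eq_starGraph_of_forall_adj_isEndVertex (hc : G.Connected) :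
    G = starGraph u := by
  have hcenter (x : V) : x = u ∨ G.Adj u x :=
    eq_or_adj_of_walk_of_forall_adj_isEndVertex hleaves (hc x u).some
  ext x y
  rw [starGraph_adj]
  refine ⟨fun hxy => ⟨hxy.ne, ?_⟩, fun ⟨hne, hxy⟩ => ?_⟩
  · refine (hcenter x).imp_right fun hux => ?_
    have hy : y ∈ G.neighborSet x := hxy
    rwa [(hleaves x hux).neighborSet_eq hux.symm] at hy
  · rcases hxy with rfl | rfl
    · exact (hcenter y).resolve_left hne.symm
    · exact ((hcenter x).resolve_left hne).symm

lemma SimpleGraph.Connected.isStar_of_forall_adj_isEndVertex (hc : G.Connected) : IsStar G := by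
  have hG := hc.eq_starGraph_of_forall_adj_isEndVertex hleaves
  refine ⟨hG ▸ isTree_starGraph u, ?_⟩
  suffices h : ∀ x, 1 < (G.neighborSet x).ncard → x = u from
    fun x hx y hy => (h x hx).trans (h y hy).symm
  intro x hx
  by_contra hxu
  have hux : G.Adj u x := by
    rw [hG, starGraph_adj]
    exact ⟨Ne.symm hxu, .inl rfl⟩
  exact hx.ne' (hleaves x hux)

end Star

lemma SimpleGraph.Connected.exists_adj_not_isEndVertex (hc : G.Connected) (hG : ¬ IsStar G)
    (u : V) : ∃ w, G.Adj u w ∧ ¬ IsEndVertex G w := by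
  by_contra! h
  exact hG (hc.isStar_of_forall_adj_isEndVertex h)

lemma IsTotalDomSet.insert_erase [DecidableEq V] {D : Finset V} (hD : IsTotalDomSet G D)
    {v w : V} (hvw : ∀ x, G.Adj x v → G.Adj x w) : IsTotalDomSet G (insert w (D.erase v)) := by
  intro x
  obtain ⟨y, hyD, hxy⟩ := hD x
  by_cases hyv : y = v
  · exact ⟨w, Finset.mem_insert_self _ _, hvw x (hyv ▸ hxy)⟩
  · exact ⟨y, Finset.mem_insert_of_mem (Finset.mem_erase.mpr ⟨hyv, hyD⟩), hxy⟩

lemma gammaT_le_card {D : Finset V} (hD : IsTotalDomSet G D) : gammaT G ≤ D.card :=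
  Nat.sInf_le ⟨D, hD, rfl⟩

lemma exists_isTotalDomSet_card_eq_gammaT [Fintype V] (h : ∀ v, ∃ u, G.Adj v u) :
    ∃ D : Finset V, IsTotalDomSet G D ∧ D.card = gammaT G :=
  Nat.sInf_mem (s := {n | ∃ D : Finset V, IsTotalDomSet G D ∧ D.card = n})
    ⟨_, Finset.univ, fun v => (h v).imp fun u hu => ⟨Finset.mem_univ u, hu⟩, rfl⟩

lemma exists_isTotalDomSet_with_fewer_endVertices [DecidableEq V]
    [DecidablePred (IsEndVertex G)] (hc : G.Connected) (hG : ¬ IsStar G) {D : Finset V}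
    (hD : IsTotalDomSet G D) (hcard : D.card = gammaT G) {v : V} (hvD : v ∈ D)
    (hv : IsEndVertex G v) :
    ∃ D' : Finset V, IsTotalDomSet G D' ∧ D'.card = gammaT G ∧
      (D'.filter (IsEndVertex G)).card < (D.filter (IsEndVertex G)).card := by
  obtain ⟨u, -, hvu⟩ := hD v
  obtain ⟨w, huw, hw⟩ := hc.exists_adj_not_isEndVertex hG u
  have hvw : ∀ x, G.Adj x v → G.Adj x w := fun x hxv => by
    have hx : x ∈ G.neighborSet v := hxv.symm
    rw [hv.neighborSet_eq hvu, Set.mem_singleton_iff] at hx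
    exact hx ▸ huw
  have hD' := hD.insert_erase hvw
  refine ⟨_, hD', le_antisymm ?_ (gammaT_le_card hD'), ?_⟩
  · calc (insert w (D.erase v)).card ≤ (D.erase v).card + 1 := Finset.card_insert_le _ _
      _ = D.card := Finset.card_erase_add_one hvD
      _ = gammaT G := hcard
  · rw [Finset.filter_insert, if_neg hw, Finset.filter_erase]
    exact Finset.card_erase_lt_of_mem (Finset.mem_filter.mpr ⟨hvD, hv⟩)

end

theorem stmt4_general {V : Type*} [Fintype V] (G : SimpleGraph V)
    (hc : G.Connected)
    (hstar : ¬ (G.IsTree ∧ {v : V | 1 < (G.neighborSet v).ncard}.Subsingleton)) :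
    ∃ D : Finset V, IsTotalDomSet G D ∧ D.card = gammaT G ∧
      ∀ v ∈ D, ¬ IsEndVertex G v := by
  classical
  have hmin : {D : Finset V | IsTotalDomSet G D ∧ D.card = gammaT G}.Nonempty :=
    exists_isTotalDomSet_card_eq_gammaT fun v =>
      (hc.exists_adj_not_isEndVertex hstar v).imp fun _ => And.left
  obtain ⟨D, ⟨hD, hcard⟩, hfewest⟩ :=
    (measure fun D : Finset V => (D.filter (IsEndVertex G)).card).wf.has_min _ hmin
  refine ⟨D, hD, hcard, fun v hvD hv => ?_⟩
  obtain ⟨D', hD', hcard', hlt⟩ :=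
    exists_isTotalDomSet_with_fewer_endVertices hc hstar hD hcard hvD hv
  exact hfewest D' ⟨hD', hcard'⟩ hlt

/-- If `G` is connected with at least three vertices and is not a star, then there is
a minimum total dominating set containing no end vertex. -/
theorem stmt4 {V : Type*} [Fintype V] (G : SimpleGraph V)
    (hc : G.Connected) (h3 : 3 ≤ Fintype.card V)
    (hstar : ¬ (G.IsTree ∧ {v : V | 1 < (G.neighborSet v).ncard}.Subsingleton)) :
    ∃ D : Finset V, IsTotalDomSet G D ∧ D.card = gammaT G ∧
      ∀ v ∈ D, ¬ IsEndVertex G v :=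
  stmt4_general G hc hstar
end

section
/- Let G be a graph with γ_t(G) = τ(G) and let D be a set that is simultaneously a minimum total dominating set and a minimum vertex cover of G. Then D contains no end vertex of G. -/
open SimpleGraph

/-! If `v ∈ D` is an end vertex, its only neighbour lies in `D` because `D` is totally
dominating, so `D \ {v}` still covers every edge: a smaller vertex cover than the minimum `D`. -/

theorem tau_le_card {V : Type*} {G : SimpleGraph V} {X : Finset V}
    (hX : _root_.IsVertexCover G X) : tau G ≤ X.card :=
  Nat.sInf_le ⟨X, hX, rfl⟩

theorem IsVertexCover.erase {V : Type*} [DecidableEq V] {G : SimpleGraph V} {X : Finset V}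
    {v : V} (hX : _root_.IsVertexCover G X) (hv : G.neighborSet v ⊆ X) :
    _root_.IsVertexCover G (X.erase v) := by
  intro a b hab
  by_cases ha : a = v
  · subst ha
    exact .inr (Finset.mem_erase.mpr ⟨hab.ne.symm, hv hab⟩)
  by_cases hb : b = v
  · subst hb
    exact .inl (Finset.mem_erase.mpr ⟨hab.ne, hv hab.symm⟩)
  exact (hX hab).imp (fun h => Finset.mem_erase.mpr ⟨ha, h⟩)
    (fun h => Finset.mem_erase.mpr ⟨hb, h⟩)

theorem IsVertexCover.neighborSet_not_subset {V : Type*} {G : SimpleGraph V} {X : Finset V}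
    (hX : _root_.IsVertexCover G X) (hmin : X.card = tau G) {v : V} (hvX : v ∈ X) :
    ¬ G.neighborSet v ⊆ X := by
  classical
  intro hv
  have := tau_le_card (hX.erase hv)
  have := Finset.card_erase_lt_of_mem hvX
  omega

theorem IsTotalDomSet.neighborSet_subset_of_isEndVertex {V : Type*} {G : SimpleGraph V}
    {D : Finset V} (hD : IsTotalDomSet G D) {v : V} (hv : IsEndVertex G v) :
    G.neighborSet v ⊆ D := by
  obtain ⟨w, hw⟩ := Set.ncard_eq_one.mp hv
  obtain ⟨u, huD, hvu⟩ := hD v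
  have hu : u ∈ G.neighborSet v := hvu
  rw [hw, Set.mem_singleton_iff] at hu
  rw [hw, Set.singleton_subset_iff, ← hu]
  exact huD

theorem stmt5_general {V : Type*} (G : SimpleGraph V)
    (D : Finset V) (hD : IsGttSet G D) :
    ∀ v ∈ D, ¬ IsEndVertex G v := by
  obtain ⟨htd, hvc, -, hτ⟩ := hD
  intro v hv hend
  exact hvc.neighborSet_not_subset hτ hv (htd.neighborSet_subset_of_isEndVertex hend)

/-- If `γ_t(G) = τ(G)` and `D` is a `(γ_t-τ)`-set of `G`, then `D` contains no end vertex. -/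
theorem stmt5 {V : Type*} (G : SimpleGraph V) (h : gammaT G = tau G)
    (D : Finset V) (hD : IsGttSet G D) :
    ∀ v ∈ D, ¬ IsEndVertex G v :=
  stmt5_general G D hD
end

section
/- Let G be a graph, and let x, y, v be vertices such that x is a leaf, y is its support vertex (the unique neighbor of x), and v is a neighbor of y distinct from x (so v is a 2-support, at distance two from the leaf x). Then for every minimum total dominating set S of G, there is no vertex u ∈ S whose private neighborhood with respect to S equals {v}. In particular, v is not quasi-isolated. -/
open SimpleGraph

namespace IsTotalDomSet

variable {V : Type*} {G : SimpleGraph V} {S : Finset V} {x y : V}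

theorem mem_of_neighborSet_eq_singleton (hS : IsTotalDomSet G S)
    (hx : G.neighborSet x = {y}) : y ∈ S := by
  obtain ⟨w, hwS, hxw⟩ := hS x
  have hwy : w ∈ G.neighborSet x := hxw
  rw [hx] at hwy
  exact hwy ▸ hwS

end IsTotalDomSet

section PrivateNeighborhood

variable {V : Type*} {G : SimpleGraph V} {S : Finset V} {u v w x y : V}

theorem mem_pn_of_neighborSet_eq_singleton (hx : G.neighborSet x = {y}) (hy : y ∈ S) :
    x ∈ pn G S y := by
  show G.neighborSet x ∩ ↑S = {y}
  rw [hx]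
  exact Set.inter_eq_left.mpr (Set.singleton_subset_iff.mpr hy)

theorem eq_of_mem_pn (hv : v ∈ pn G S u) (hw : w ∈ S) (hvw : G.Adj v w) : w = u := by
  have hw' : w ∈ G.neighborSet v ∩ ↑S := ⟨hvw, hw⟩
  rwa [hv] at hw'

/-- The support `y` of the leaf `x` lies in `S` and has `x` as a private neighbor, so a private
neighborhood `{v}` with `v ~ y` would have to be that of `y` and contain `x`. -/
theorem IsTotalDomSet.pn_ne_singleton_of_adj_support (hS : IsTotalDomSet G S)
    (hx : G.neighborSet x = {y}) (hyv : G.Adj y v) (hvx : v ≠ x) (u : V) :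
    pn G S u ≠ {v} := by
  intro hpn
  have hyS : y ∈ S := hS.mem_of_neighborSet_eq_singleton hx
  have hyu : y = u := eq_of_mem_pn (hpn ▸ Set.mem_singleton v) hyS hyv.symm
  have hxpn : x ∈ pn G S u := hyu ▸ mem_pn_of_neighborSet_eq_singleton hx hyS
  rw [hpn] at hxpn
  exact hvx hxpn.symm

end PrivateNeighborhood

/-- A 2-support (a neighbor `v ≠ x` of the support `y` of a leaf `x`) is never the sole
private neighbor of a vertex of a minimum total dominating set; in particular it is not
quasi-isolated. -/
theorem stmt10 {V : Type*} (G : SimpleGraph V) (x y v : V)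
    (hx : G.neighborSet x = {y}) (hyv : G.Adj y v) (hvx : v ≠ x) :
    (∀ S : Finset V, IsTotalDomSet G S → S.card = gammaT G →
      ∀ u ∈ S, pn G S u ≠ {v}) ∧ ¬ QuasiIsolated G v :=
  ⟨fun _ hS _ u _ => hS.pn_ne_singleton_of_adj_support hx hyv hvx u,
    fun ⟨_, hS, _, u, _, hpn⟩ => hS.pn_ne_singleton_of_adj_support hx hyv hvx u hpn⟩
end

section
/- Let T be a tree with a (γ_t-τ)-set D. If T_i is obtained from T by one of the operations O_1–O_4, then T_i also has a (γ_t-τ)-set; explicitly: D ∪ {x,y} for O_1 with attached path (v,x,y,z), D for O_2, D ∪ {v} for O_3 with attached path (v,w), and D ∪ {v,y} for O_4 with attached path (x,v,y,z). -/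
open SimpleGraph

/-!
Each candidate set is `D ⊎ R` with `R` on the attached path `P`, and both minimality claims split
over the two sides. A vertex cover of the sum restricts to vertex covers of `T` and of `P`. A total
dominating set `X` of the sum restricts to one of `P - v`, and to one of `T` unless `u` is dominated
only across the new edge; adding any neighbour of `u` repairs that, so `γ_t(T) ≤ |X ∩ T| + 1`, with
the `+ 1` needed only when `v ∈ X`. If `u` is not quasi-isolated it is never needed: a left part of
size below `γ_t(T)`, completed by a neighbour `t` of `u`, would be a minimum total dominating set in
which `u` is the only private neighbour of `t`.
-/

open Finset

section Minimum

variable {α : Type*} {G : SimpleGraph α} {S : Finset α}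

lemma gammaT_le_card_s16 (hS : IsTotalDomSet G S) : gammaT G ≤ S.card :=
  Nat.sInf_le ⟨S, hS, rfl⟩

lemma tau_le_card_s16 (hS : _root_.IsVertexCover G S) : tau G ≤ S.card :=
  Nat.sInf_le ⟨S, hS, rfl⟩

lemma gammaT_eq_card (hS : IsTotalDomSet G S)
    (hmin : ∀ X, IsTotalDomSet G X → S.card ≤ X.card) : gammaT G = S.card :=
  (gammaT_le_card_s16 hS).antisymm <| le_csInf ⟨_, S, hS, rfl⟩ <| by
    rintro _ ⟨X, hX, rfl⟩
    exact hmin X hX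

lemma tau_eq_card (hS : _root_.IsVertexCover G S)
    (hmin : ∀ X, _root_.IsVertexCover G X → S.card ≤ X.card) : tau G = S.card :=
  (tau_le_card_s16 hS).antisymm <| le_csInf ⟨_, S, hS, rfl⟩ <| by
    rintro _ ⟨X, hX, rfl⟩
    exact hmin X hX

end Minimum

section GraphSum

variable {α β : Type*} {G : SimpleGraph α} {H : SimpleGraph β} {u : α} {v : β}

lemma graphSum_adj_inl_inl {a b : α} : (graphSum G H u v).Adj (.inl a) (.inl b) ↔ G.Adj a b := by
  simpa [graphSum, G.adj_comm b a] using G.ne_of_adj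

lemma graphSum_adj_inr_inr {a b : β} : (graphSum G H u v).Adj (.inr a) (.inr b) ↔ H.Adj a b := by
  simpa [graphSum, H.adj_comm b a] using H.ne_of_adj

lemma graphSum_adj_inl_inr {a : α} {b : β} :
    (graphSum G H u v).Adj (.inl a) (.inr b) ↔ a = u ∧ b = v := by
  simp [graphSum]

lemma graphSum_adj_inr_inl {a : α} {b : β} :
    (graphSum G H u v).Adj (.inr b) (.inl a) ↔ a = u ∧ b = v := by
  rw [adj_comm, graphSum_adj_inl_inr]

lemma isTotalDomSet_graphSum_disjSum {D : Finset α} {R : Finset β} (hD : IsTotalDomSet G D)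
    (hR : ∀ w, (w = v ∧ u ∈ D) ∨ ∃ r ∈ R, H.Adj w r) :
    IsTotalDomSet (graphSum G H u v) (D.disjSum R) := by
  rintro (w | w)
  · obtain ⟨d, hd, hwd⟩ := hD w
    exact ⟨.inl d, inl_mem_disjSum.2 hd, graphSum_adj_inl_inl.2 hwd⟩
  · obtain ⟨rfl, hu⟩ | ⟨r, hr, hwr⟩ := hR w
    · exact ⟨.inl u, inl_mem_disjSum.2 hu, graphSum_adj_inr_inl.2 ⟨rfl, rfl⟩⟩
    · exact ⟨.inr r, inr_mem_disjSum.2 hr, graphSum_adj_inr_inr.2 hwr⟩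

lemma isVertexCover_graphSum_disjSum {C : Finset α} {R : Finset β}
    (hC : _root_.IsVertexCover G C) (hR : _root_.IsVertexCover H R) (huv : u ∈ C ∨ v ∈ R) :
    _root_.IsVertexCover (graphSum G H u v) (C.disjSum R) := by
  rintro (a | a) (b | b) hab
  · simpa using hC (graphSum_adj_inl_inl.1 hab)
  · obtain ⟨rfl, rfl⟩ := graphSum_adj_inl_inr.1 hab
    simpa using huv
  · obtain ⟨rfl, rfl⟩ := graphSum_adj_inr_inl.1 hab
    simpa [or_comm] using huv
  · simpa using hR (graphSum_adj_inr_inr.1 hab)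

lemma IsVertexCover.toLeft_of_graphSum {X : Finset (α ⊕ β)}
    (hX : _root_.IsVertexCover (graphSum G H u v) X) : _root_.IsVertexCover G X.toLeft :=
  fun _ _ hab => by simpa using hX (graphSum_adj_inl_inl.2 hab)

lemma IsVertexCover.toRight_of_graphSum {X : Finset (α ⊕ β)}
    (hX : _root_.IsVertexCover (graphSum G H u v) X) : _root_.IsVertexCover H X.toRight :=
  fun _ _ hab => by simpa using hX (graphSum_adj_inr_inr.2 hab)

lemma tau_add_le_card_of_isVertexCover_graphSum {k : ℕ}
    (hH : ∀ Y, _root_.IsVertexCover H Y → k ≤ Y.card) {X : Finset (α ⊕ β)}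
    (hX : _root_.IsVertexCover (graphSum G H u v) X) : tau G + k ≤ X.card := by
  rw [← card_toLeft_add_card_toRight]
  exact add_le_add (tau_le_card_s16 hX.toLeft_of_graphSum) (hH _ hX.toRight_of_graphSum)

section TotalDomination

variable {X : Finset (α ⊕ β)} (hX : IsTotalDomSet (graphSum G H u v) X)
include hX

lemma IsTotalDomSet.exists_toLeft_of_graphSum (w : α) :
    (∃ d ∈ X.toLeft, G.Adj w d) ∨ (w = u ∧ .inr v ∈ X) := by
  obtain ⟨d | d, hd, hwd⟩ := hX (.inl w)
  · exact .inl ⟨d, mem_toLeft.2 hd, graphSum_adj_inl_inl.1 hwd⟩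
  · obtain ⟨rfl, rfl⟩ := graphSum_adj_inl_inr.1 hwd
    exact .inr ⟨rfl, hd⟩

lemma IsTotalDomSet.exists_toRight_of_graphSum {w : β} (hw : w ≠ v) :
    ∃ y ∈ X.toRight, H.Adj w y := by
  obtain ⟨d | d, hd, hwd⟩ := hX (.inr w)
  · exact absurd (graphSum_adj_inr_inl.1 hwd).2 hw
  · exact ⟨d, mem_toRight.2 hd, graphSum_adj_inr_inr.1 hwd⟩

lemma IsTotalDomSet.toLeft_of_graphSum (hu : ∃ d ∈ X.toLeft, G.Adj u d) :
    IsTotalDomSet G X.toLeft := fun w => by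
  obtain h | ⟨rfl, -⟩ := hX.exists_toLeft_of_graphSum w
  exacts [h, hu]

lemma IsTotalDomSet.insert_toLeft_of_graphSum [DecidableEq α] {t : α} (ht : G.Adj u t) :
    IsTotalDomSet G (insert t X.toLeft) := fun w => by
  obtain ⟨d, hd, hwd⟩ | ⟨rfl, -⟩ := hX.exists_toLeft_of_graphSum w
  · exact ⟨d, mem_insert_of_mem hd, hwd⟩
  · exact ⟨t, mem_insert_self _ _, ht⟩

lemma gammaT_le_card_toLeft_add_one {t : α} (ht : G.Adj u t) : gammaT G ≤ X.toLeft.card + 1 := by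
  classical
  exact (gammaT_le_card_s16 (hX.insert_toLeft_of_graphSum ht)).trans (card_insert_le _ _)

lemma gammaT_le_card_toLeft_of_inr_notMem (hv : .inr v ∉ X) : gammaT G ≤ X.toLeft.card := by
  refine gammaT_le_card_s16 (hX.toLeft_of_graphSum ?_)
  obtain h | ⟨-, h⟩ := hX.exists_toLeft_of_graphSum u
  exacts [h, absurd h hv]

lemma gammaT_le_card_toLeft_of_not_quasiIsolated {t : α} (ht : G.Adj u t)
    (hu : ¬ QuasiIsolated G u) : gammaT G ≤ X.toLeft.card := by
  classical
  by_contra! hlt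
  have hnoLeft : ¬ ∃ d ∈ X.toLeft, G.Adj u d := fun h =>
    hlt.not_ge (gammaT_le_card_s16 (hX.toLeft_of_graphSum h))
  set S := insert t X.toLeft
  have hS : IsTotalDomSet G S := hX.insert_toLeft_of_graphSum ht
  have hSmin : S.card = gammaT G :=
    ((card_insert_le _ _).trans hlt).antisymm (gammaT_le_card_s16 hS)
  have htX : t ∉ X.toLeft := fun htX => by
    rw [show S = X.toLeft from insert_eq_self.2 htX] at hSmin
    omega
  refine hu ⟨S, hS, hSmin, t, mem_insert_self _ _, Set.eq_singleton_iff_unique_mem.2 ⟨?_, ?_⟩⟩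
  · refine Set.eq_singleton_iff_unique_mem.2 ⟨⟨ht, mem_insert_self _ _⟩, ?_⟩
    rintro s ⟨hus, hsS⟩
    obtain rfl | hsX := mem_insert.1 hsS
    exacts [rfl, absurd ⟨s, hsX, hus⟩ hnoLeft]
  · intro w hw
    by_contra hwu
    obtain ⟨d, hd, hwd⟩ | ⟨rfl, -⟩ := hX.exists_toLeft_of_graphSum w
    · have hdt : d = t := hw.subset ⟨hwd, mem_insert_of_mem hd⟩
      exact htX (hdt ▸ hd)
    · exact hwu rfl

lemma gammaT_add_le_card_of_isTotalDomSet_graphSum {k : ℕ} {t : α} (ht : G.Adj u t)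
    (hH : ∀ Y : Finset β, (∀ w ≠ v, ∃ y ∈ Y, H.Adj w y) → k ≤ Y.card ∧ (v ∈ Y → k + 1 ≤ Y.card)) :
    gammaT G + k ≤ X.card := by
  obtain ⟨hk, hkv⟩ := hH _ fun w hw => hX.exists_toRight_of_graphSum hw
  rw [← card_toLeft_add_card_toRight]
  by_cases hv : .inr v ∈ X
  · have := gammaT_le_card_toLeft_add_one hX ht
    have := hkv (mem_toRight.2 hv)
    omega
  · have := gammaT_le_card_toLeft_of_inr_notMem hX hv
    omega

lemma gammaT_add_le_card_of_isTotalDomSet_graphSum_of_not_quasiIsolated {k : ℕ} {t : α}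
    (ht : G.Adj u t) (hu : ¬ QuasiIsolated G u)
    (hH : ∀ Y : Finset β, (∀ w ≠ v, ∃ y ∈ Y, H.Adj w y) → k ≤ Y.card) :
    gammaT G + k ≤ X.card := by
  rw [← card_toLeft_add_card_toRight]
  exact add_le_add (gammaT_le_card_toLeft_of_not_quasiIsolated hX ht hu)
    (hH _ fun w hw => hX.exists_toRight_of_graphSum hw)

end TotalDomination

theorem IsGttSet.graphSum_disjSum {D : Finset α} {R : Finset β} (hD : IsGttSet G D)
    (hRdom : ∀ w, (w = v ∧ u ∈ D) ∨ ∃ r ∈ R, H.Adj w r) (hRcov : _root_.IsVertexCover H R)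
    (huv : u ∈ D ∨ v ∈ R) (hRcovMin : ∀ Y, _root_.IsVertexCover H Y → R.card ≤ Y.card)
    (hdomMin : ∀ X, IsTotalDomSet (graphSum G H u v) X → gammaT G + R.card ≤ X.card) :
    IsGttSet (graphSum G H u v) (D.disjSum R) := by
  obtain ⟨hDdom, hDcov, hγ, hτ⟩ := hD
  have hdom := isTotalDomSet_graphSum_disjSum (u := u) hDdom hRdom
  have hcov := isVertexCover_graphSum_disjSum hDcov hRcov huv
  refine ⟨hdom, hcov, (gammaT_eq_card hdom fun X hX => ?_).symm,
    (tau_eq_card hcov fun X hX => ?_).symm⟩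
  · rw [card_disjSum, hγ]
    exact hdomMin X hX
  · rw [card_disjSum, hτ]
    exact tau_add_le_card_of_isVertexCover_graphSum hRcovMin hX

end GraphSum

section PathGraph

lemma pathGraph_four_card_le_of_dominates_ne_zero (Y : Finset (Fin 4))
    (hY : ∀ w ≠ 0, ∃ y ∈ Y, (pathGraph 4).Adj w y) : 2 ≤ Y.card ∧ (0 ∈ Y → 3 ≤ Y.card) := by
  revert Y
  simp only [pathGraph_adj]
  decide

lemma pathGraph_four_two_le_card_of_dominates_ne_one (Y : Finset (Fin 4))
    (hY : ∀ w ≠ 1, ∃ y ∈ Y, (pathGraph 4).Adj w y) : 2 ≤ Y.card := by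
  revert Y
  simp only [pathGraph_adj]
  decide

lemma pathGraph_four_two_le_card_of_isVertexCover (Y : Finset (Fin 4))
    (hY : _root_.IsVertexCover (pathGraph 4) Y) : 2 ≤ Y.card := by
  revert Y
  simp only [_root_.IsVertexCover, pathGraph_adj]
  decide

lemma pathGraph_four_isVertexCover_one_two : _root_.IsVertexCover (pathGraph 4) {1, 2} := by
  simp only [_root_.IsVertexCover, pathGraph_adj]
  decide

lemma pathGraph_four_dominated_by_one_two (w : Fin 4) :
    ∃ r ∈ ({1, 2} : Finset (Fin 4)), (pathGraph 4).Adj w r := by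
  revert w
  simp only [pathGraph_adj]
  decide

lemma pathGraph_two_one_le_card_of_dominates_ne_zero (Y : Finset (Fin 2))
    (hY : ∀ w ≠ 0, ∃ y ∈ Y, (pathGraph 2).Adj w y) : 1 ≤ Y.card := by
  obtain ⟨y, hy, -⟩ := hY 1 (by decide)
  exact card_pos.2 ⟨y, hy⟩

lemma pathGraph_two_one_le_card_of_isVertexCover (Y : Finset (Fin 2))
    (hY : _root_.IsVertexCover (pathGraph 2) Y) : 1 ≤ Y.card := by
  obtain h | h := hY (show (pathGraph 2).Adj 0 1 by simp [pathGraph_adj])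
  all_goals exact card_pos.2 ⟨_, h⟩

lemma pathGraph_two_isVertexCover_zero : _root_.IsVertexCover (pathGraph 2) {0} := by
  simp only [_root_.IsVertexCover, pathGraph_adj]
  decide

end PathGraph

theorem stmt16_general {V : Type*} [DecidableEq V] (T : SimpleGraph V)
    (D : Finset V) (hD : IsGttSet T D) :
    (∀ u ∈ D, IsGttSet (graphSum T (SimpleGraph.pathGraph 4) u 0)
      (D.image Sum.inl ∪ {Sum.inr 1, Sum.inr 2})) ∧
    (∀ u ∈ D, IsGttSet (graphSum T (⊥ : SimpleGraph Unit) u ())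
      (D.image Sum.inl)) ∧
    (∀ u ∈ D, ¬ QuasiIsolated T u →
      IsGttSet (graphSum T (SimpleGraph.pathGraph 2) u 0)
        (D.image Sum.inl ∪ {Sum.inr 0})) ∧
    (∀ u : V, ¬ QuasiIsolated T u →
      IsGttSet (graphSum T (SimpleGraph.pathGraph 4) u 1)
        (D.image Sum.inl ∪ {Sum.inr 1, Sum.inr 2})) := by
  refine ⟨fun u hu => ?_, fun u hu => ?_, fun u hu hq => ?_, fun u hq => ?_⟩ <;>
    obtain ⟨t, -, ht⟩ := hD.1 u
  · rw [show (D.image .inl ∪ {.inr 1, .inr 2} : Finset (V ⊕ Fin 4)) = D.disjSum {1, 2} by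
       ext (a | a) <;> simp]
    exact hD.graphSum_disjSum (fun w => .inr (pathGraph_four_dominated_by_one_two w))
      pathGraph_four_isVertexCover_one_two (.inl hu) pathGraph_four_two_le_card_of_isVertexCover
      fun X hX => gammaT_add_le_card_of_isTotalDomSet_graphSum hX ht
        pathGraph_four_card_le_of_dominates_ne_zero
  · rw [show (D.image .inl : Finset (V ⊕ Unit)) = D.disjSum ∅ by ext (a | a) <;> simp]
    exact hD.graphSum_disjSum (fun _ => .inl ⟨rfl, hu⟩) (fun _ _ h => h.elim) (.inl hu)
      (fun _ _ => Nat.zero_le _) fun X hX => gammaT_add_le_card_of_isTotalDomSet_graphSum hX ht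
        fun Y _ => ⟨Nat.zero_le _, fun h => card_pos.2 ⟨_, h⟩⟩
  · rw [show (D.image .inl ∪ {.inr 0} : Finset (V ⊕ Fin 2)) = D.disjSum {0} by ext (a | a) <;> simp]
    exact hD.graphSum_disjSum
      (fun w => by fin_cases w; exacts [.inl ⟨rfl, hu⟩, .inr ⟨0, by simp, by simp [pathGraph_adj]⟩])
      pathGraph_two_isVertexCover_zero (.inl hu) pathGraph_two_one_le_card_of_isVertexCover
      fun X hX => gammaT_add_le_card_of_isTotalDomSet_graphSum_of_not_quasiIsolated hX ht hq
        pathGraph_two_one_le_card_of_dominates_ne_zero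
  · rw [show (D.image .inl ∪ {.inr 1, .inr 2} : Finset (V ⊕ Fin 4)) = D.disjSum {1, 2} by
       ext (a | a) <;> simp]
    exact hD.graphSum_disjSum (fun w => .inr (pathGraph_four_dominated_by_one_two w))
      pathGraph_four_isVertexCover_one_two (.inr (by simp))
      pathGraph_four_two_le_card_of_isVertexCover fun X hX =>
        gammaT_add_le_card_of_isTotalDomSet_graphSum_of_not_quasiIsolated hX ht hq
          pathGraph_four_two_le_card_of_dominates_ne_one

/-- If `T` has a `(γ_t-τ)`-set `D`, then the tree obtained by each of the operations
`O_1`–`O_4` has a `(γ_t-τ)`-set, explicitly: `D ∪ {x,y}` for `O_1` (attached path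
`(v,x,y,z)`), `D` for `O_2`, `D ∪ {v}` for `O_3` (attached path `(v,w)`), and
`D ∪ {v,y}` for `O_4` (attached path `(x,v,y,z)`). -/
theorem stmt16 {V : Type*} [DecidableEq V] (T : SimpleGraph V) (hT : T.IsTree)
    (D : Finset V) (hD : IsGttSet T D) :
    (∀ u ∈ D, IsGttSet (graphSum T (SimpleGraph.pathGraph 4) u 0)
      (D.image Sum.inl ∪ {Sum.inr 1, Sum.inr 2})) ∧
    (∀ u ∈ D, IsGttSet (graphSum T (⊥ : SimpleGraph Unit) u ())
      (D.image Sum.inl)) ∧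
    (∀ u ∈ D, ¬ QuasiIsolated T u →
      IsGttSet (graphSum T (SimpleGraph.pathGraph 2) u 0)
        (D.image Sum.inl ∪ {Sum.inr 0})) ∧
    (∀ u : V, ¬ QuasiIsolated T u →
      IsGttSet (graphSum T (SimpleGraph.pathGraph 4) u 1)
        (D.image Sum.inl ∪ {Sum.inr 1, Sum.inr 2})) :=
  stmt16_general T D hD
end
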